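/- arXiv:1801.08302 — 4 statements merged into one kernel-verified Lean document; each statement's English description precedes it below -/
import Mathlib

section
/- Hölder's inequality for weak Lorentz spaces with change of measures fails in general: let n ≥ 1, 0 < p1, p2 < ∞, 1/p = 1/p1 + 1/p2, and define f(x) = |x|^{-n/p1}·χ_{{|x|≥1}}(x), g(x) = |x|^{n/p1}·χ_{{|x|≥1}}(x), w1(x) = 1, and w2(x) = |x|^{-n(1+p2/p1)} for |x| ≥ 1 and w2(x) = 1 for |x| < 1, and set w := w1^{p/p1}·w2^{p/p2}. Then ‖f‖_{L^{p1,∞}(w1)} < ∞ and ‖g‖_{L^{p2,∞}(w2)} < ∞, but ‖fg‖_{L^{p,∞}(w)} = ∞. -/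
open MeasureTheory ENNReal Set

noncomputable section

/-- Euclidean space ℝⁿ. -/
abbrev Rn (n : ℕ) := EuclideanSpace ℝ (Fin n)

/-- An axis-parallel cube in ℝⁿ. -/
def IsCube {n : ℕ} (Q : Set (Rn n)) : Prop :=
  ∃ (c : Rn n) (r : ℝ), 0 < r ∧ Q = {x : Rn n | ∀ i, |x i - c i| ≤ r}

/-- A weight: a positive locally integrable function. -/
def IsWeight {n : ℕ} (w : Rn n → ℝ) : Prop :=
  (∀ x, 0 < w x) ∧ MeasureTheory.LocallyIntegrable w volume

/-- v(F) = ∫_F v. -/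
def wSet {n : ℕ} (v : Rn n → ℝ) (F : Set (Rn n)) : ℝ≥0∞ :=
  ∫⁻ x in F, ENNReal.ofReal (v x)

/-- Distribution function of an ℝ≥0∞-valued function w.r.t. the weight v. -/
def distrib {n : ℕ} (v : Rn n → ℝ) (f : Rn n → ℝ≥0∞) (t : ℝ) : ℝ≥0∞ :=
  wSet v {x | ENNReal.ofReal t < f x}

/-- Weak Lorentz quasinorm ‖f‖_{L^{p,∞}(v)} = sup_{y>0} y · v({f > y})^{1/p}. -/
def wLpInfty {n : ℕ} (p : ℝ) (v : Rn n → ℝ) (f : Rn n → ℝ≥0∞) : ℝ≥0∞ :=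
  ⨆ (y : ℝ) (_ : 0 < y), ENNReal.ofReal y * (distrib v f y) ^ (1 / p)

/-- Lorentz norm ‖f‖_{L^{p,1}(v)} = p ∫₀^∞ v({f > y})^{1/p} dy. -/
def wLp1 {n : ℕ} (p : ℝ) (v : Rn n → ℝ) (f : Rn n → ℝ≥0∞) : ℝ≥0∞ :=
  ENNReal.ofReal p * ∫⁻ y in Set.Ioi (0 : ℝ), (distrib v f y) ^ (1 / p)

/-- Lebesgue norm ‖f‖_{L^p(v)} = (∫ f^p v)^{1/p}. -/
def wLp {n : ℕ} (p : ℝ) (v : Rn n → ℝ) (f : Rn n → ℝ≥0∞) : ℝ≥0∞ :=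
  (∫⁻ x, (f x) ^ p * ENNReal.ofReal (v x)) ^ (1 / p)

/-- ‖f‖_{L^∞(v)}: essential supremum with respect to the measure with density v. -/
def wLinfty {n : ℕ} (v : Rn n → ℝ) (f : Rn n → ℝ≥0∞) : ℝ≥0∞ :=
  essSup f (volume.withDensity fun x => ENNReal.ofReal (v x))

/-- |f| as an ℝ≥0∞-valued function. -/
def ennAbs {n : ℕ} (f : Rn n → ℝ) : Rn n → ℝ≥0∞ := fun x => ENNReal.ofReal |f x|

/-- The Hardy–Littlewood maximal operator over cubes. -/
def maximal {n : ℕ} (f : Rn n → ℝ) (x : Rn n) : ℝ≥0∞ :=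
  ⨆ (Q : Set (Rn n)) (_ : IsCube Q) (_ : x ∈ Q),
    (volume Q)⁻¹ * ∫⁻ y in Q, ENNReal.ofReal |f y|

/-- The 2-fold product of Hardy–Littlewood maximal operators. -/
def Mprod {n : ℕ} (f g : Rn n → ℝ) (x : Rn n) : ℝ≥0∞ :=
  maximal f x * maximal g x

/-- The Muckenhoupt A_p constant, 1 < p. -/
def ApConst {n : ℕ} (p : ℝ) (v : Rn n → ℝ) : ℝ≥0∞ :=
  ⨆ (Q : Set (Rn n)) (_ : IsCube Q),
    ((volume Q)⁻¹ * ∫⁻ x in Q, ENNReal.ofReal (v x)) *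
      ((volume Q)⁻¹ * ∫⁻ x in Q, ENNReal.ofReal (v x ^ (1 - p / (p - 1)))) ^ (p - 1)

/-- The Muckenhoupt A₁ condition: Mv ≤ C v a.e. -/
def MemA1 {n : ℕ} (v : Rn n → ℝ) : Prop :=
  ∃ C : ℝ, ∀ᵐ x ∂(volume : Measure (Rn n)), maximal v x ≤ ENNReal.ofReal (C * v x)

/-- Membership in the Muckenhoupt class A_p, 1 ≤ p < ∞. -/
def MemAp {n : ℕ} (p : ℝ) (v : Rn n → ℝ) : Prop :=
  (p = 1 ∧ MemA1 v) ∨ (1 < p ∧ ApConst p v ≠ ∞)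

/-- Membership in A_∞ = ∪_{p ≥ 1} A_p. -/
def MemAinfty {n : ℕ} (v : Rn n → ℝ) : Prop :=
  ∃ p : ℝ, 1 ≤ p ∧ MemAp p v

/-- The A_p^𝓡 constant: sup_Q v(Q)^{1/p} ‖χ_Q v⁻¹‖_{L^{p',∞}(v)} / |Q|, with p' = ∞ if p = 1. -/
def AprConst {n : ℕ} (p : ℝ) (v : Rn n → ℝ) : ℝ≥0∞ :=
  ⨆ (Q : Set (Rn n)) (_ : IsCube Q),
    (wSet v Q) ^ (1 / p) *
      (if p = 1 then wLinfty v (Q.indicator fun y => ENNReal.ofReal (v y)⁻¹)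
        else wLpInfty (p / (p - 1)) v (Q.indicator fun y => ENNReal.ofReal (v y)⁻¹)) /
      volume Q

/-- Membership in the restricted weak type class A_p^𝓡. -/
def MemApR {n : ℕ} (p : ℝ) (v : Rn n → ℝ) : Prop :=
  AprConst p v ≠ ∞

/-- The bilinear Hardy–Littlewood maximal operator of Calderón. -/
def bilinearM {n : ℕ} (f g : Rn n → ℝ) (x : Rn n) : ℝ≥0∞ :=
  ⨆ (r : ℝ) (_ : 0 < r),
    (volume (Metric.ball (0 : Rn n) r))⁻¹ *
      ∫⁻ y in Metric.ball (0 : Rn n) r, ENNReal.ofReal (|f (x - y)| * |g (x + y)|)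

end

/-!
Everything reduces to the integral of `‖x‖ ^ (-a)` outside the ball of radius `R`, which in polar
coordinates equals `n |B(0,1)| R ^ (n - a) / (a - n)` for `a > n` and is infinite for `a ≤ n`.
The level sets `{g > y}` lie outside the ball of radius `y ^ (p₁ / n)`, where `w₂` decays like
`‖x‖ ^ (-a)` with `a = n (1 + p₂ / p₁) > n`; this gives `w₂({g > y}) ≲ y ^ (-p₂)`, and `f` is the
classical `L^{p₁,∞}` function `‖x‖ ^ (-n / p₁)`. But outside the unit ball `f g = 1` and
`w = ‖x‖ ^ (-n)`, the borderline non-integrable power, so `w({f g > 1/2}) = ∞`.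
-/

open Metric Module

section RadialPower

variable {E : Type*} [NormedAddCommGroup E] {a R : ℝ}

lemma measurableSet_lt_norm [MeasurableSpace E] [OpensMeasurableSpace E] (R : ℝ) :
    MeasurableSet {x : E | R < ‖x‖} :=
  measurableSet_lt measurable_const measurable_norm

lemma indicator_lt_norm_rpow_neg (a R : ℝ) :
    {x : E | R < ‖x‖}.indicator (fun x => ‖x‖ ^ (-a)) =
      fun x => (Ioi R).indicator (fun r => r ^ (-a)) ‖x‖ := rfl

variable [NormedSpace ℝ E] [FiniteDimensional ℝ E] [Nontrivial E]

-- in polar coordinates `‖x‖ ^ (-a) dx` outside the ball of radius `R` becomes `r ^ (d - 1 - a) dr`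
lemma radial_density_eq :
    EqOn (fun r : ℝ => r ^ (finrank ℝ E - 1) • (Ioi R).indicator (fun r => r ^ (-a)) r)
      ((Ioi R).indicator fun r => r ^ ((finrank ℝ E : ℝ) - 1 - a)) (Ioi 0) := by
  intro r (hr : 0 < r)
  by_cases hRr : R < r
  · have hd : ((finrank ℝ E - 1 : ℕ) : ℝ) = (finrank ℝ E : ℝ) - 1 := by
      rw [Nat.cast_sub Module.finrank_pos, Nat.cast_one]
    simp only [indicator_of_mem (show r ∈ Ioi R from hRr), smul_eq_mul, ← Real.rpow_natCast, hd,
      ← Real.rpow_add hr, sub_eq_add_neg]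
  · simp [hRr]

variable [MeasurableSpace E] [BorelSpace E] (μ : Measure E) [μ.IsAddHaarMeasure]

theorem integrableOn_norm_rpow_neg_iff (hR : 0 < R) :
    IntegrableOn (fun x : E => ‖x‖ ^ (-a)) {x | R < ‖x‖} μ ↔ (finrank ℝ E : ℝ) < a := by
  rw [← integrable_indicator_iff (measurableSet_lt_norm R), indicator_lt_norm_rpow_neg,
    integrable_fun_norm_addHaar, integrableOn_congr_fun radial_density_eq measurableSet_Ioi,
    IntegrableOn, integrable_indicator_iff measurableSet_Ioi, IntegrableOn,
    Measure.restrict_restrict measurableSet_Ioi, Ioi_inter_Ioi, max_eq_left hR.le,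
    ← IntegrableOn, integrableOn_Ioi_rpow_iff hR]
  constructor <;> intro h <;> linarith

theorem setIntegral_norm_rpow_neg (hR : 0 < R) (ha : (finrank ℝ E : ℝ) < a) :
    ∫ x in {x | R < ‖x‖}, ‖x‖ ^ (-a) ∂μ =
      finrank ℝ E * μ.real (ball 0 1) / (a - finrank ℝ E) * R ^ ((finrank ℝ E : ℝ) - a) := by
  rw [← integral_indicator (measurableSet_lt_norm R), indicator_lt_norm_rpow_neg,
    integral_fun_norm_addHaar, setIntegral_congr_fun measurableSet_Ioi radial_density_eq,
    setIntegral_indicator measurableSet_Ioi, Ioi_inter_Ioi, max_eq_right hR.le,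
    integral_Ioi_rpow_of_lt (by linarith) hR, nsmul_eq_mul, smul_eq_mul]
  have : (finrank ℝ E : ℝ) - 1 - a + 1 = finrank ℝ E - a := by ring
  rw [this, div_mul_eq_mul_div, mul_div_assoc, neg_div, ← div_neg, neg_sub]
  ring

theorem lintegral_norm_rpow_neg (hR : 0 < R) (ha : (finrank ℝ E : ℝ) < a) :
    ∫⁻ x in {x | R < ‖x‖}, ENNReal.ofReal (‖x‖ ^ (-a)) ∂μ =
      ENNReal.ofReal (finrank ℝ E * μ.real (ball 0 1) / (a - finrank ℝ E)) *
        ENNReal.ofReal (R ^ ((finrank ℝ E : ℝ) - a)) := by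
  rw [← ofReal_integral_eq_lintegral_ofReal ((integrableOn_norm_rpow_neg_iff μ hR).2 ha)
    (ae_of_all _ fun x => by positivity), setIntegral_norm_rpow_neg μ hR ha,
    ENNReal.ofReal_mul (by have := sub_pos.2 ha; positivity)]

theorem lintegral_norm_rpow_neg_eq_top (hR : 0 < R) (ha : a ≤ finrank ℝ E) :
    ∫⁻ x in {x | R < ‖x‖}, ENNReal.ofReal (‖x‖ ^ (-a)) ∂μ = ∞ := by
  by_contra h
  refine not_lt.2 ha ((integrableOn_norm_rpow_neg_iff μ hR).1
    ⟨(measurable_norm.pow_const _).aestronglyMeasurable, ?_⟩)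
  exact (hasFiniteIntegral_iff_ofReal (ae_of_all _ fun x => by positivity)).2
    (lt_top_iff_ne_top.2 h)

end RadialPower

section WeakLorentz

variable {n : ℕ} {p : ℝ} {v : Rn n → ℝ}

lemma wLpInfty_le_of_distrib_le {f : Rn n → ℝ≥0∞} (hp : 0 < p) (C : ℝ≥0∞)
    (h : ∀ y, 0 < y → distrib v f y ≤ C * ENNReal.ofReal (y ^ (-p))) :
    wLpInfty p v f ≤ C ^ (1 / p) := by
  refine iSup₂_le fun y hy => ?_
  calc ENNReal.ofReal y * distrib v f y ^ (1 / p)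
      ≤ ENNReal.ofReal y * (C * ENNReal.ofReal (y ^ (-p))) ^ (1 / p) := by gcongr; exact h y hy
    _ = C ^ (1 / p) * ENNReal.ofReal (y * (y ^ (-p)) ^ (1 / p)) := by
        rw [ENNReal.mul_rpow_of_nonneg _ _ (by positivity),
          ENNReal.ofReal_rpow_of_nonneg (by positivity) (by positivity), ENNReal.ofReal_mul hy.le]
        ring
    _ = C ^ (1 / p) := by
        rw [← Real.rpow_mul hy.le, neg_mul, mul_one_div_cancel hp.ne', Real.rpow_neg_one,
          mul_inv_cancel₀ hy.ne', ENNReal.ofReal_one, mul_one]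

lemma wLpInfty_eq_top_of_distrib_eq_top {f : Rn n → ℝ≥0∞} (hp : 0 < p) {y : ℝ} (hy : 0 < y)
    (h : distrib v f y = ∞) : wLpInfty p v f = ∞ := by
  refine eq_top_iff.2 (le_trans ?_
    (le_iSup₂ (f := fun y (_ : 0 < y) => ENNReal.ofReal y * distrib v f y ^ (1 / p)) y hy))
  rw [h, ENNReal.top_rpow_of_pos (by positivity), ENNReal.mul_top (ENNReal.ofReal_pos.2 hy).ne']

lemma setOf_lt_ennAbs_subset_closedBall {f : Rn n → ℝ} {β y : ℝ} (hβ : 0 < β) (hy : 0 < y)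
    (hf : ∀ x, |f x| ≤ ‖x‖ ^ (-β)) :
    {x | ENNReal.ofReal y < ennAbs f x} ⊆ closedBall 0 (y ^ (-β)⁻¹) := by
  intro x hx
  have hyx : y < ‖x‖ ^ (-β) := ((ENNReal.ofReal_lt_ofReal_iff_of_nonneg hy.le).1 hx).trans_le (hf x)
  have hx0 : 0 < ‖x‖ := by
    refine (norm_nonneg x).lt_of_ne fun h => ?_
    rw [← h, Real.zero_rpow (neg_ne_zero.2 hβ.ne')] at hyx
    exact hy.not_gt hyx
  rw [mem_closedBall, dist_zero_right, Real.le_rpow_inv_iff_of_neg hx0 hy (neg_neg_of_pos hβ)]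
  exact hyx.le

lemma setOf_lt_ennAbs_subset_lt_norm {f : Rn n → ℝ} {β y : ℝ} (hβ : 0 < β) (hy : 0 < y)
    (hf : ∀ x, |f x| ≤ ‖x‖ ^ β) :
    {x | ENNReal.ofReal y < ennAbs f x} ⊆ {x | y ^ β⁻¹ < ‖x‖} := fun x hx =>
  (Real.rpow_inv_lt_iff_of_pos hy.le (norm_nonneg x) hβ).2
    (((ENNReal.ofReal_lt_ofReal_iff_of_nonneg hy.le).1 hx).trans_le (hf x))

variable [NeZero n]

theorem wLpInfty_one_lt_top_of_abs_le_norm_rpow_neg (hp : 0 < p) {f : Rn n → ℝ}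
    (hf : ∀ x, |f x| ≤ ‖x‖ ^ (-(n / p))) : wLpInfty p (fun _ => 1) (ennAbs f) < ∞ := by
  have hn : (0 : ℝ) < n := by exact_mod_cast NeZero.pos n
  refine (wLpInfty_le_of_distrib_le hp (volume (ball (0 : Rn n) 1)) fun y hy => ?_).trans_lt
    (rpow_lt_top_of_nonneg (by positivity) measure_ball_lt_top.ne)
  calc distrib (fun _ => 1) (ennAbs f) y = volume {x | ENNReal.ofReal y < ennAbs f x} := by
        simp [distrib, wSet]
    _ ≤ volume (closedBall (0 : Rn n) (y ^ (-(n / p))⁻¹)) :=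
        measure_mono (setOf_lt_ennAbs_subset_closedBall (by positivity) hy hf)
    _ = _ := by
        rw [Measure.addHaar_closedBall volume 0 (by positivity), finrank_euclideanSpace_fin,
          ← Real.rpow_natCast, ← Real.rpow_mul hy.le, mul_comm]
        congr 3
        field_simp

theorem wLpInfty_lt_top_of_abs_le_norm_rpow (hp : 0 < p) {β : ℝ} (hβ : 0 < β) {g : Rn n → ℝ}
    (hv : ∀ x, x ≠ 0 → v x ≤ ‖x‖ ^ (-(n + β * p))) (hg : ∀ x, |g x| ≤ ‖x‖ ^ β) :
    wLpInfty p v (ennAbs g) < ∞ := by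
  have ha : (n : ℝ) < n + β * p := lt_add_of_pos_right _ (by positivity)
  refine (wLpInfty_le_of_distrib_le hp (ENNReal.ofReal
      (n * volume.real (ball (0 : Rn n) 1) / (n + β * p - n))) fun y hy => ?_).trans_lt
    (rpow_lt_top_of_nonneg (by positivity) ofReal_ne_top)
  have hR : 0 < y ^ β⁻¹ := by positivity
  calc distrib v (ennAbs g) y ≤ ∫⁻ x in {x | y ^ β⁻¹ < ‖x‖}, ENNReal.ofReal (v x) :=
        lintegral_mono_set (setOf_lt_ennAbs_subset_lt_norm hβ hy hg)
    _ ≤ ∫⁻ x in {x : Rn n | y ^ β⁻¹ < ‖x‖}, ENNReal.ofReal (‖x‖ ^ (-(n + β * p))) :=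
        setLIntegral_mono' (measurableSet_lt_norm _) fun x hx =>
          ENNReal.ofReal_le_ofReal (hv x (norm_pos_iff.1 (hR.trans hx)))
    _ = _ := by
        rw [lintegral_norm_rpow_neg volume hR (by simpa using ha), finrank_euclideanSpace_fin,
          ← Real.rpow_mul hy.le]
        congr 3
        field_simp
        ring

theorem wLpInfty_eq_top_of_norm_rpow_neg_le (hp : 0 < p) {h : Rn n → ℝ}
    (hv : ∀ x, 1 < ‖x‖ → ‖x‖ ^ (-(n : ℝ)) ≤ v x) (hh : ∀ x, 1 < ‖x‖ → 1 ≤ |h x|) :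
    wLpInfty p v (ennAbs h) = ∞ := by
  refine wLpInfty_eq_top_of_distrib_eq_top hp one_half_pos (eq_top_iff.2 ?_)
  calc ∞ = ∫⁻ x in {x : Rn n | 1 < ‖x‖}, ENNReal.ofReal (‖x‖ ^ (-(n : ℝ))) :=
        (lintegral_norm_rpow_neg_eq_top volume one_pos (by simp)).symm
    _ ≤ ∫⁻ x in {x : Rn n | 1 < ‖x‖}, ENNReal.ofReal (v x) :=
        setLIntegral_mono' (measurableSet_lt_norm 1) fun x hx => ENNReal.ofReal_le_ofReal (hv x hx)
    _ ≤ distrib v (ennAbs h) (1 / 2) := lintegral_mono_set fun x hx =>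
        (ENNReal.ofReal_lt_ofReal_iff_of_nonneg (by norm_num)).2 (by linarith [hh x hx])

end WeakLorentz

section TruncatedPower

variable {E : Type*} [NormedAddCommGroup E] {x : E}

lemma abs_ite_one_le_norm_rpow (b : ℝ) :
    |if 1 ≤ ‖x‖ then ‖x‖ ^ b else 0| ≤ ‖x‖ ^ b := by
  split_ifs
  · exact (abs_of_nonneg (by positivity)).le
  · simpa using Real.rpow_nonneg (norm_nonneg x) b

lemma ite_one_le_norm_rpow_le {c : ℝ} (hx : x ≠ 0) (hc : c ≤ 0) :
    (if 1 ≤ ‖x‖ then ‖x‖ ^ c else 1) ≤ ‖x‖ ^ c := by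
  split_ifs with h
  · exact le_rfl
  · exact Real.one_le_rpow_of_pos_of_le_one_of_nonpos (norm_pos_iff.2 hx) (not_le.1 h).le hc

end TruncatedPower

/-- Hölder's inequality for weak Lorentz spaces with change of
measures fails in general. -/
theorem stmt_2 (n : ℕ) (hn : 1 ≤ n) (p p₁ p₂ : ℝ) (hp₁ : 0 < p₁) (hp₂ : 0 < p₂)
    (hp : 1 / p = 1 / p₁ + 1 / p₂)
    (f g w₁ w₂ w : Rn n → ℝ)
    (hf : ∀ x, f x = if 1 ≤ ‖x‖ then ‖x‖ ^ (-(n : ℝ) / p₁) else 0)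
    (hg : ∀ x, g x = if 1 ≤ ‖x‖ then ‖x‖ ^ ((n : ℝ) / p₁) else 0)
    (hw₁ : ∀ x, w₁ x = 1)
    (hw₂ : ∀ x, w₂ x = if 1 ≤ ‖x‖ then ‖x‖ ^ (-(n : ℝ) * (1 + p₂ / p₁)) else 1)
    (hw : ∀ x, w x = w₁ x ^ (p / p₁) * w₂ x ^ (p / p₂)) :
    wLpInfty p₁ w₁ (ennAbs f) < ∞ ∧ wLpInfty p₂ w₂ (ennAbs g) < ∞ ∧
      wLpInfty p w (ennAbs fun x => f x * g x) = ∞ := by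
  have : NeZero n := ⟨by omega⟩
  have hp0 : 0 < p := one_div_pos.1 (hp ▸ by positivity)
  obtain rfl : w₁ = fun _ => 1 := funext hw₁
  refine ⟨wLpInfty_one_lt_top_of_abs_le_norm_rpow_neg hp₁ fun x => ?_,
    wLpInfty_lt_top_of_abs_le_norm_rpow hp₂ (β := n / p₁) (by positivity) (fun x hx => ?_)
      fun x => (hg x ▸ abs_ite_one_le_norm_rpow _),
    wLpInfty_eq_top_of_norm_rpow_neg_le hp0 (fun x hx => ?_) fun x hx => ?_⟩
  · rw [hf, ← neg_div]
    exact abs_ite_one_le_norm_rpow _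
  · rw [hw₂, show -((n : ℝ) + n / p₁ * p₂) = -n * (1 + p₂ / p₁) by ring]
    exact ite_one_le_norm_rpow_le hx
      (mul_nonpos_of_nonpos_of_nonneg (neg_nonpos.2 n.cast_nonneg) (by positivity))
  · have hexp : -(n : ℝ) * (1 + p₂ / p₁) * (p / p₂) = -n := by
      calc _ = -n * (p * (1 / p₁ + 1 / p₂)) := by field_simp; ring
        _ = -n := by rw [← hp, mul_one_div_cancel hp0.ne', mul_one]
    rw [hw, hw₂, if_pos hx.le, Real.one_rpow, one_mul, ← Real.rpow_mul (norm_nonneg x), hexp]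
  · rw [hf, hg, if_pos hx.le, if_pos hx.le, ← Real.rpow_add (one_pos.trans hx), neg_div,
      neg_add_cancel, Real.rpow_zero, abs_one]
end

section
/- Let 0 < p1, p2 < ∞, 1/p = 1/p1 + 1/p2, let w1, w2 be weights on ℝⁿ, and set w := w1^{p/p1}·w2^{p/p2}. If F is a measurable function with ‖F‖_∞ ≤ 1 and g is any measurable function, then sup_{0<t<1} t·‖χ_{{|F|>t}} g‖_{L^{p,∞}(w)} ≤ ‖F‖_{L^{p1,∞}(w1)} ‖g‖_{L^{p2,∞}(w2)}. -/
open MeasureTheory ENNReal Set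

/-
Hölder's inequality for the measures with densities gives
`w(A) ≤ w₁(A)^{p/p₁} w₂(A)^{p/p₂}`. Applied to `A = {|F| > t} ∩ {|g| > y}` and enlarging `A` in
each factor separately, `t · y · w(A)^{1/p} ≤ (t · w₁({|F| > t})^{1/p₁}) (y · w₂({|g| > y})^{1/p₂})`,
and each factor is bounded by the corresponding weak-type quasinorm.
-/

section

variable {n : ℕ}

lemma wSet_le_rpow_mul_rpow {θ₁ θ₂ : ℝ} (hθ₁ : 0 ≤ θ₁) (hθ₂ : 0 ≤ θ₂) (hθ : θ₁ + θ₂ = 1)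
    {w₁ w₂ w : Rn n → ℝ} (hw₁ : ∀ x, 0 ≤ w₁ x) (hw₂ : ∀ x, 0 ≤ w₂ x)
    (hm₁ : AEMeasurable w₁) (hm₂ : AEMeasurable w₂)
    (hw : ∀ x, w x = w₁ x ^ θ₁ * w₂ x ^ θ₂) (A : Set (Rn n)) :
    wSet w A ≤ wSet w₁ A ^ θ₁ * wSet w₂ A ^ θ₂ := by
  have hdensity : ∀ x, ENNReal.ofReal (w x) =
      ENNReal.ofReal (w₁ x) ^ θ₁ * ENNReal.ofReal (w₂ x) ^ θ₂ := fun x => by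
    rw [hw, ENNReal.ofReal_mul (Real.rpow_nonneg (hw₁ x) _),
      ENNReal.ofReal_rpow_of_nonneg (hw₁ x) hθ₁, ENNReal.ofReal_rpow_of_nonneg (hw₂ x) hθ₂]
  simp only [wSet, hdensity]
  exact ENNReal.lintegral_mul_norm_pow_le hm₁.restrict.ennreal_ofReal
    hm₂.restrict.ennreal_ofReal hθ₁ hθ₂ hθ

lemma distrib_indicator (v : Rn n → ℝ) (S : Set (Rn n)) (f : Rn n → ℝ≥0∞) (y : ℝ) :
    distrib v (S.indicator f) y = wSet v (S ∩ {x | ENNReal.ofReal y < f x}) := by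
  rw [distrib]
  congr 1
  ext x
  by_cases hx : x ∈ S <;> simp [hx]

lemma distrib_ennAbs (v : Rn n → ℝ) (F : Rn n → ℝ) {t : ℝ} (ht : 0 ≤ t) :
    distrib v (ennAbs F) t = wSet v {x | t < |F x|} := by
  simp only [distrib, ennAbs, ENNReal.ofReal_lt_ofReal_iff_of_nonneg ht]

lemma le_wLpInfty (p : ℝ) (v : Rn n → ℝ) (f : Rn n → ℝ≥0∞) {y : ℝ} (hy : 0 < y) :
    ENNReal.ofReal y * distrib v f y ^ (1 / p) ≤ wLpInfty p v f :=
  le_iSup₂ (f := fun (y : ℝ) (_ : 0 < y) => ENNReal.ofReal y * distrib v f y ^ (1 / p)) y hy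

lemma wLpInfty_indicator_le {p p₁ p₂ : ℝ} (hp₁ : 0 < p₁) (hp₂ : 0 < p₂)
    (hp : 1 / p = 1 / p₁ + 1 / p₂) {w₁ w₂ w : Rn n → ℝ} (hw₁ : ∀ x, 0 ≤ w₁ x)
    (hw₂ : ∀ x, 0 ≤ w₂ x) (hm₁ : AEMeasurable w₁) (hm₂ : AEMeasurable w₂)
    (hw : ∀ x, w x = w₁ x ^ (p / p₁) * w₂ x ^ (p / p₂)) (S : Set (Rn n)) (f : Rn n → ℝ≥0∞) :
    wLpInfty p w (S.indicator f) ≤ wSet w₁ S ^ (1 / p₁) * wLpInfty p₂ w₂ f := by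
  have hp0 : 0 < p := one_div_pos.mp (hp ▸ by positivity)
  have hθ : p / p₁ + p / p₂ = 1 := by
    rw [div_eq_mul_one_div p p₁, div_eq_mul_one_div p p₂, ← mul_add, ← hp, mul_one_div_cancel hp0.ne']
  have hexp : ∀ q, 0 < q → p / q * (1 / p) = 1 / q := fun q hq => by field_simp
  refine iSup₂_le fun y hy => ?_
  set A := S ∩ {x | ENNReal.ofReal y < f x}
  calc ENNReal.ofReal y * distrib w (S.indicator f) y ^ (1 / p)
      ≤ ENNReal.ofReal y * (wSet w₁ A ^ (p / p₁) * wSet w₂ A ^ (p / p₂)) ^ (1 / p) := by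
        rw [distrib_indicator]
        gcongr
        exact wSet_le_rpow_mul_rpow (by positivity) (by positivity) hθ hw₁ hw₂ hm₁ hm₂ hw A
    _ = wSet w₁ A ^ (1 / p₁) * (ENNReal.ofReal y * wSet w₂ A ^ (1 / p₂)) := by
        rw [ENNReal.mul_rpow_of_nonneg _ _ (by positivity), ← ENNReal.rpow_mul,
          ← ENNReal.rpow_mul, hexp p₁ hp₁, hexp p₂ hp₂]
        ring
    _ ≤ wSet w₁ S ^ (1 / p₁) * (ENNReal.ofReal y * distrib w₂ f y ^ (1 / p₂)) := by
        gcongr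
        · exact lintegral_mono_set inter_subset_left
        · exact lintegral_mono_set inter_subset_right
    _ ≤ wSet w₁ S ^ (1 / p₁) * wLpInfty p₂ w₂ f := by
        gcongr
        exact le_wLpInfty p₂ w₂ f hy

end

theorem stmt_4_general {n : ℕ} (p p₁ p₂ : ℝ) (hp₁ : 0 < p₁) (hp₂ : 0 < p₂)
    (hp : 1 / p = 1 / p₁ + 1 / p₂)
    (w₁ w₂ : Rn n → ℝ) (hw₁ : IsWeight w₁) (hw₂ : IsWeight w₂)
    (w : Rn n → ℝ) (hw : ∀ x, w x = w₁ x ^ (p / p₁) * w₂ x ^ (p / p₂))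
    (F g : Rn n → ℝ) :
    (⨆ (t : ℝ) (_ : 0 < t) (_ : t < 1),
        ENNReal.ofReal t * wLpInfty p w ({x | t < |F x|}.indicator (ennAbs g))) ≤
      wLpInfty p₁ w₁ (ennAbs F) * wLpInfty p₂ w₂ (ennAbs g) := by
  refine iSup_le fun t => iSup₂_le fun ht _ => ?_
  calc ENNReal.ofReal t * wLpInfty p w ({x | t < |F x|}.indicator (ennAbs g))
      ≤ ENNReal.ofReal t * (wSet w₁ {x | t < |F x|} ^ (1 / p₁) * wLpInfty p₂ w₂ (ennAbs g)) := by
        gcongr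
        exact wLpInfty_indicator_le hp₁ hp₂ hp (fun x => (hw₁.1 x).le) (fun x => (hw₂.1 x).le)
          hw₁.2.aestronglyMeasurable.aemeasurable hw₂.2.aestronglyMeasurable.aemeasurable hw _ _
    _ ≤ wLpInfty p₁ w₁ (ennAbs F) * wLpInfty p₂ w₂ (ennAbs g) := by
        rw [← mul_assoc, ← distrib_ennAbs w₁ F ht.le]
        gcongr
        exact le_wLpInfty p₁ w₁ (ennAbs F) ht

/-- restricted Hölder inequality for the level sets of a bounded function. -/
theorem stmt_4 {n : ℕ} (p p₁ p₂ : ℝ) (hp₁ : 0 < p₁) (hp₂ : 0 < p₂)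
    (hp : 1 / p = 1 / p₁ + 1 / p₂)
    (w₁ w₂ : Rn n → ℝ) (hw₁ : IsWeight w₁) (hw₂ : IsWeight w₂)
    (w : Rn n → ℝ) (hw : ∀ x, w x = w₁ x ^ (p / p₁) * w₂ x ^ (p / p₂))
    (F g : Rn n → ℝ) (hF : Measurable F) (hg : Measurable g)
    (hF1 : ∀ᵐ x ∂(volume : Measure (Rn n)), |F x| ≤ 1) :
    (⨆ (t : ℝ) (_ : 0 < t) (_ : t < 1),
        ENNReal.ofReal t * wLpInfty p w ({x | t < |F x|}.indicator (ennAbs g))) ≤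
      wLpInfty p₁ w₁ (ennAbs F) * wLpInfty p₂ w₂ (ennAbs g) :=
  stmt_4_general p p₁ p₂ hp₁ hp₂ hp w₁ w₂ hw₁ hw₂ w hw F g
end

section
/- Let 0 < p1, p2 < ∞, 1/p = 1/p1 + 1/p2, let w1, w2 be weights on ℝⁿ, and set w := w1^{p/p1}·w2^{p/p2}. For every 0 < δ < 1 there exists a constant C(p,δ) > 0, depending only on p and δ, such that for all measurable functions f, g with ‖f‖_∞ ≤ 1, ‖fg‖_{L^{p,∞}(w)} ≤ C(p,δ) ‖|f|^δ‖_{L^{p1,∞}(w1)} ‖g‖_{L^{p2,∞}(w2)}; one may take C(p,δ) = inf_{0<q<p} 2·(p / ((log 2)(1−δ) q (p−q)))^{1/q}. -/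
open MeasureTheory ENNReal Set

/-!
Split `{|f g| > y}` into the dyadic shells `2^{-k-1} < |f| ≤ 2^{-k}`. On the `k`-th shell
`|f|^δ > 2^{-(k+1)δ}` and `|g| > 2^k y`, so Hölder's inequality for the weights (exponents
`p/p₁ + p/p₂ = 1`) together with the two weak-type bounds controls its `w`-measure by
`(2^{(k+1)δ} 2^{-k} ‖|f|^δ‖ ‖g‖ / y)^p`. Since `δ < 1` these bounds form a geometric series, whose
sum gives the constant `2 (2^{(1-δ)p} - 1)^{-1/p}`. That this is at most
`2 (p / (log 2 (1-δ) q (p-q)))^{1/q}` for each `0 < q < p` is the elementary inequality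
`a^m ≤ e^s - 1` for `m ≥ 1`, `m a ≤ s`, with `m = p/q` and `e^s = 2^{(1-δ)p}`.
-/

lemma Real.rpow_le_exp_sub_one {a m s : ℝ} (ha : 0 ≤ a) (hm : 1 ≤ m) (h : m * a ≤ s) :
    a ^ m ≤ Real.exp s - 1 := by
  rcases le_or_gt a 1 with ha1 | ha1
  · calc a ^ m ≤ a ^ (1 : ℝ) := Real.rpow_le_rpow_of_exponent_ge' ha ha1 zero_le_one hm
      _ ≤ s := by rw [Real.rpow_one]; nlinarith
      _ ≤ Real.exp s - 1 := by linarith [Real.add_one_le_exp s]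
  · have hs : 0 ≤ s - 1 := by nlinarith
    calc a ^ m ≤ Real.exp (a - 1) ^ m := by
          gcongr; linarith [Real.add_one_le_exp (a - 1)]
      _ = Real.exp (m * a - m) := by rw [← Real.exp_mul]; ring_nf
      _ ≤ Real.exp (s - 1) := Real.exp_le_exp.2 (by linarith)
      _ ≤ Real.exp (s - 1) * (Real.exp 1 - 1) := by
          have := Real.add_one_le_exp 1
          nlinarith [Real.one_le_exp hs]
      _ = Real.exp s - Real.exp (s - 1) := by rw [mul_sub, ← Real.exp_add]; ring_nf
      _ ≤ Real.exp s - 1 := by linarith [Real.one_le_exp hs]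

-- Its `p`-th power `2^p / (2^{(1-δ)p} - 1)` is the dyadic sum `∑ₖ 2^{(k+1)δp} 2^{-kp}`.
noncomputable def dyadicHolderConst (p δ : ℝ) : ℝ := 2 * (2 ^ ((1 - δ) * p) - 1) ^ (-(1 / p))

lemma dyadicHolderConst_pos {p δ : ℝ} (hp : 0 < p) (hδ : δ < 1) : 0 < dyadicHolderConst p δ := by
  have h : 1 < (2 : ℝ) ^ ((1 - δ) * p) := Real.one_lt_rpow one_lt_two (by nlinarith)
  exact mul_pos two_pos (Real.rpow_pos_of_pos (sub_pos.2 h) _)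

lemma dyadicHolderConst_le {p δ q : ℝ} (hδ : δ < 1) (hq : 0 < q) (hqp : q < p) :
    dyadicHolderConst p δ ≤ 2 * (p / (Real.log 2 * (1 - δ) * q * (p - q))) ^ (1 / q) := by
  have hp : 0 < p := hq.trans hqp
  set a := Real.log 2 * (1 - δ) * q * (p - q) / p
  have ha : 0 < a :=
    div_pos (mul_pos (mul_pos (mul_pos (Real.log_pos one_lt_two) (sub_pos.2 hδ)) hq)
      (sub_pos.2 hqp)) hp
  have hpow : a ^ (p / q) ≤ 2 ^ ((1 - δ) * p) - 1 := by
    rw [Real.rpow_def_of_pos two_pos]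
    refine Real.rpow_le_exp_sub_one ha.le ((one_le_div hq).2 hqp.le) ?_
    have : p / q * a = Real.log 2 * (1 - δ) * (p - q) := by
      simp only [a]; field_simp
    rw [this]
    have : 0 ≤ Real.log 2 * (1 - δ) := mul_nonneg (Real.log_pos one_lt_two).le (by linarith)
    nlinarith
  unfold dyadicHolderConst
  gcongr 2 * ?_
  calc (2 ^ ((1 - δ) * p) - 1) ^ (-(1 / p)) ≤ (a ^ (p / q)) ^ (-(1 / p)) :=
        Real.rpow_le_rpow_of_nonpos (by positivity) hpow (by simp [hp.le])
    _ = (p / (Real.log 2 * (1 - δ) * q * (p - q))) ^ (1 / q) := by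
        rw [show p / (Real.log 2 * (1 - δ) * q * (p - q)) = a⁻¹ by simp [a],
          Real.inv_rpow ha.le, ← Real.rpow_neg ha.le, ← Real.rpow_mul ha.le]
        congr 1; field_simp

lemma exists_dyadic_shell {u : ℝ} (hu : 0 < u) (hu₁ : u ≤ 1) :
    ∃ k : ℕ, ((2 : ℝ) ^ (k + 1))⁻¹ < u ∧ u ≤ ((2 : ℝ) ^ k)⁻¹ := by
  obtain ⟨k, hk₁, hk₂⟩ := exists_nat_pow_near ((one_le_inv₀ hu).2 hu₁) one_lt_two
  exact ⟨k, (inv_lt_comm₀ hu (by positivity)).1 hk₂, (le_inv_comm₀ (by positivity) hu).1 hk₁⟩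

lemma hasSum_dyadicHolderConst {p δ y : ℝ} (hp : 0 < p) (hδ : δ < 1) (hy : 0 < y) :
    HasSum (fun k : ℕ => ((((2 : ℝ) ^ (k + 1))⁻¹ ^ δ * (2 ^ k * y)) ^ p)⁻¹)
      ((y / dyadicHolderConst p δ) ^ p)⁻¹ := by
  have hterm : ∀ k : ℕ, ((((2 : ℝ) ^ (k + 1))⁻¹ ^ δ * (2 ^ k * y)) ^ p)⁻¹ =
      2 ^ (δ * p) * (y ^ p)⁻¹ * (2 ^ (δ * p) / 2 ^ p) ^ k := fun k => by
    have : (2 : ℝ) ^ p ≠ 0 := by positivity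
    rw [Real.mul_rpow (by positivity) (by positivity), Real.mul_rpow (by positivity) hy.le,
      Real.inv_rpow (by positivity), Real.inv_rpow (by positivity), ← Real.rpow_mul (by positivity),
      ← Real.rpow_pow_comm two_pos.le, ← Real.rpow_pow_comm two_pos.le, div_pow, pow_succ]
    field_simp
  simp_rw [hterm]
  set D := (2 : ℝ) ^ (δ * p)
  set P := (2 : ℝ) ^ p
  have hDP : D < P := Real.rpow_lt_rpow_of_exponent_lt one_lt_two (by nlinarith)
  have hD : 0 < D := by positivity
  have hP : P ≠ 0 := by positivity
  have hPD : 0 ≤ P / D - 1 := by rw [sub_nonneg, one_le_div hD]; exact hDP.le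
  have hK : dyadicHolderConst p δ ^ p = P / (P / D - 1) := by
    have h2 : (2 : ℝ) ^ ((1 - δ) * p) = P / D := by
      rw [← Real.rpow_sub two_pos]; ring_nf
    rw [dyadicHolderConst, h2, Real.mul_rpow two_pos.le (Real.rpow_nonneg hPD _),
      ← Real.rpow_mul hPD, neg_mul, one_div_mul_cancel hp.ne', Real.rpow_neg_one]
    exact (div_eq_mul_inv _ _).symm
  have hsum : D * (y ^ p)⁻¹ * (1 - D / P)⁻¹ = ((y / dyadicHolderConst p δ) ^ p)⁻¹ := by
    have : P - D ≠ 0 := (sub_pos.2 hDP).ne'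
    rw [Real.div_rpow hy.le (dyadicHolderConst_pos hp hδ).le, hK]
    field_simp
  rw [← hsum]
  exact (hasSum_geometric_of_lt_one (by positivity) ((div_lt_one (by positivity)).2 hDP)).mul_left _

lemma pos_of_div_add_div_eq_one {p p₁ p₂ : ℝ} (hp₁ : 0 < p₁) (hp₂ : 0 < p₂)
    (hp : p / p₁ + p / p₂ = 1) : 0 < p := by
  by_contra! h
  linarith [div_nonpos_of_nonpos_of_nonneg h hp₁.le, div_nonpos_of_nonpos_of_nonneg h hp₂.le]

lemma ENNReal.div_ofReal_rpow (X : ℝ≥0∞) {c p : ℝ} (hc : 0 < c) (hp : 0 ≤ p) :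
    (X / ENNReal.ofReal c) ^ p = X ^ p * ENNReal.ofReal ((c ^ p)⁻¹) := by
  rw [div_eq_mul_inv, ENNReal.mul_rpow_of_nonneg _ _ hp, ← ENNReal.ofReal_inv_of_pos hc,
    ENNReal.ofReal_rpow_of_pos (inv_pos.2 hc), Real.inv_rpow hc.le]

section WeakType

variable {n : ℕ}

lemma wLpInfty_le_iff {p : ℝ} (hp : 0 < p) {v : Rn n → ℝ} {h : Rn n → ℝ≥0∞} {X : ℝ≥0∞} :
    wLpInfty p v h ≤ X ↔ ∀ t : ℝ, 0 < t → distrib v h t ≤ (X / ENNReal.ofReal t) ^ p := by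
  refine iSup₂_le_iff.trans (forall₂_congr fun t ht => ?_)
  rw [mul_comm, ← ENNReal.le_div_iff_mul_le (Or.inl (ENNReal.ofReal_pos.2 ht).ne')
    (Or.inl ENNReal.ofReal_ne_top), one_div, ENNReal.rpow_inv_le_iff hp]

lemma wSet_le_of_subset_superlevel {p : ℝ} (hp : 0 < p) (v : Rn n → ℝ) {h : Rn n → ℝ≥0∞}
    {S : Set (Rn n)} {t : ℝ} (ht : 0 < t) (hS : S ⊆ {x | ENNReal.ofReal t < h x}) :
    wSet v S ≤ (wLpInfty p v h / ENNReal.ofReal t) ^ p :=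
  (lintegral_mono_set hS).trans ((wLpInfty_le_iff hp).1 le_rfl t ht)

lemma wSet_rpow_mul_rpow_le {θ₁ θ₂ : ℝ} (hθ₁ : 0 ≤ θ₁) (hθ₂ : 0 ≤ θ₂) (hθ : θ₁ + θ₂ = 1)
    {w₁ w₂ : Rn n → ℝ} (hw₁ : 0 ≤ w₁) (hw₂ : 0 ≤ w₂) (hm₁ : AEMeasurable w₁)
    (hm₂ : AEMeasurable w₂) (S : Set (Rn n)) :
    wSet (fun x => w₁ x ^ θ₁ * w₂ x ^ θ₂) S ≤ wSet w₁ S ^ θ₁ * wSet w₂ S ^ θ₂ := by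
  have hsplit : ∀ x, ENNReal.ofReal (w₁ x ^ θ₁ * w₂ x ^ θ₂) =
      ENNReal.ofReal (w₁ x) ^ θ₁ * ENNReal.ofReal (w₂ x) ^ θ₂ := fun x => by
    rw [ENNReal.ofReal_mul (Real.rpow_nonneg (hw₁ x) _), ENNReal.ofReal_rpow_of_nonneg (hw₁ x) hθ₁,
      ENNReal.ofReal_rpow_of_nonneg (hw₂ x) hθ₂]
  simp only [wSet, hsplit]
  exact ENNReal.lintegral_mul_norm_pow_le hm₁.ennreal_ofReal.restrict hm₂.ennreal_ofReal.restrict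
    hθ₁ hθ₂ hθ

lemma wSet_le_of_subset_superlevels {p p₁ p₂ : ℝ} (hp₁ : 0 < p₁) (hp₂ : 0 < p₂)
    (hp : p / p₁ + p / p₂ = 1) {w₁ w₂ : Rn n → ℝ} (hw₁ : IsWeight w₁) (hw₂ : IsWeight w₂)
    {h₁ h₂ : Rn n → ℝ≥0∞} {S : Set (Rn n)} {a b : ℝ} (ha : 0 < a) (hb : 0 < b)
    (hSa : S ⊆ {x | ENNReal.ofReal a < h₁ x}) (hSb : S ⊆ {x | ENNReal.ofReal b < h₂ x}) :
    wSet (fun x => w₁ x ^ (p / p₁) * w₂ x ^ (p / p₂)) S ≤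
      (wLpInfty p₁ w₁ h₁ * wLpInfty p₂ w₂ h₂ / ENNReal.ofReal (a * b)) ^ p := by
  have hp₀ := pos_of_div_add_div_eq_one hp₁ hp₂ hp
  set A := wLpInfty p₁ w₁ h₁
  set B := wLpInfty p₂ w₂ h₂
  calc _ ≤ wSet w₁ S ^ (p / p₁) * wSet w₂ S ^ (p / p₂) :=
        wSet_rpow_mul_rpow_le (by positivity) (by positivity) hp (fun x => (hw₁.1 x).le)
          (fun x => (hw₂.1 x).le) hw₁.2.aestronglyMeasurable.aemeasurable
          hw₂.2.aestronglyMeasurable.aemeasurable S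
    _ ≤ ((A / ENNReal.ofReal a) ^ p₁) ^ (p / p₁) * ((B / ENNReal.ofReal b) ^ p₂) ^ (p / p₂) := by
        gcongr
        · exact wSet_le_of_subset_superlevel hp₁ w₁ ha hSa
        · exact wSet_le_of_subset_superlevel hp₂ w₂ hb hSb
    _ = (A / ENNReal.ofReal a * (B / ENNReal.ofReal b)) ^ p := by
        rw [← ENNReal.rpow_mul, ← ENNReal.rpow_mul, mul_div_cancel₀ _ hp₁.ne',
          mul_div_cancel₀ _ hp₂.ne', ENNReal.mul_rpow_of_nonneg _ _ hp₀.le]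
    _ = _ := by
        rw [ENNReal.ofReal_mul ha.le, ENNReal.mul_div_mul_comm (Or.inr ENNReal.ofReal_ne_top)
          (Or.inl ENNReal.ofReal_ne_top)]

def dyadicShell {α : Type*} (f g : α → ℝ) (y : ℝ) (k : ℕ) : Set α :=
  {x | ((2 : ℝ) ^ (k + 1))⁻¹ < |f x| ∧ |f x| ≤ ((2 : ℝ) ^ k)⁻¹ ∧ y < |f x * g x|}

lemma ae_subset_iUnion_dyadicShell {f : Rn n → ℝ} (g : Rn n → ℝ)
    (hf : ∀ᵐ x ∂(volume : Measure (Rn n)), |f x| ≤ 1) (y : ℝ) (hy : 0 < y) :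
    {x | ENNReal.ofReal y < ennAbs (fun x => f x * g x) x} ≤ᵐ[volume] ⋃ k, dyadicShell f g y k := by
  filter_upwards [hf] with x hfx hx
  have hy' : y < |f x * g x| := (ENNReal.ofReal_lt_ofReal_iff'.1 hx).1
  have hf₀ : 0 < |f x| := abs_pos.2 fun h => by simp [h] at hy'; linarith
  obtain ⟨k, hk⟩ := exists_dyadic_shell hf₀ hfx
  exact mem_iUnion.2 ⟨k, hk.1, hk.2, hy'⟩

lemma wSet_dyadicShell_le {p p₁ p₂ δ : ℝ} (hp₁ : 0 < p₁) (hp₂ : 0 < p₂)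
    (hp : p / p₁ + p / p₂ = 1) (hδ₀ : 0 < δ) {w₁ w₂ : Rn n → ℝ} (hw₁ : IsWeight w₁)
    (hw₂ : IsWeight w₂) (f g : Rn n → ℝ) {y : ℝ} (hy : 0 < y) (k : ℕ) :
    wSet (fun x => w₁ x ^ (p / p₁) * w₂ x ^ (p / p₂)) (dyadicShell f g y k) ≤
      (wLpInfty p₁ w₁ (fun x => ENNReal.ofReal (|f x| ^ δ)) * wLpInfty p₂ w₂ (ennAbs g) /
        ENNReal.ofReal (((2 : ℝ) ^ (k + 1))⁻¹ ^ δ * (2 ^ k * y))) ^ p := by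
  refine wSet_le_of_subset_superlevels hp₁ hp₂ hp hw₁ hw₂ (by positivity) (by positivity)
    (fun x hx => ?_) (fun x hx => ?_)
  · have hf₀ : 0 < |f x| := lt_trans (by positivity) hx.1
    exact (ENNReal.ofReal_lt_ofReal_iff (by positivity)).2
      (Real.rpow_lt_rpow (by positivity) hx.1 hδ₀)
  · obtain ⟨-, hfk, hfg⟩ := hx
    have hg : y < ((2 : ℝ) ^ k)⁻¹ * |g x| := by
      rw [abs_mul] at hfg
      exact hfg.trans_le (mul_le_mul_of_nonneg_right hfk (abs_nonneg _))
    have hg' := (lt_inv_mul_iff₀ (by positivity)).1 hg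
    exact (ENNReal.ofReal_lt_ofReal_iff (lt_of_le_of_lt (by positivity) hg')).2 hg'

theorem wLpInfty_mul_le_dyadicHolderConst {p p₁ p₂ δ : ℝ} (hp₁ : 0 < p₁) (hp₂ : 0 < p₂)
    (hp : p / p₁ + p / p₂ = 1) (hδ₀ : 0 < δ) (hδ₁ : δ < 1) {w₁ w₂ : Rn n → ℝ}
    (hw₁ : IsWeight w₁) (hw₂ : IsWeight w₂) {f g : Rn n → ℝ}
    (hf : ∀ᵐ x ∂(volume : Measure (Rn n)), |f x| ≤ 1) :
    wLpInfty p (fun x => w₁ x ^ (p / p₁) * w₂ x ^ (p / p₂)) (ennAbs fun x => f x * g x) ≤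
      ENNReal.ofReal (dyadicHolderConst p δ) *
        (wLpInfty p₁ w₁ (fun x => ENNReal.ofReal (|f x| ^ δ)) * wLpInfty p₂ w₂ (ennAbs g)) := by
  have hp₀ := pos_of_div_add_div_eq_one hp₁ hp₂ hp
  have hK := dyadicHolderConst_pos hp₀ hδ₁
  set K := dyadicHolderConst p δ
  set AB := wLpInfty p₁ w₁ (fun x => ENNReal.ofReal (|f x| ^ δ)) * wLpInfty p₂ w₂ (ennAbs g)
  set w := fun x => w₁ x ^ (p / p₁) * w₂ x ^ (p / p₂)
  rw [wLpInfty_le_iff hp₀]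
  intro y hy
  have hsum := hasSum_dyadicHolderConst hp₀ hδ₁ hy
  calc distrib w _ y ≤ wSet w (⋃ k, dyadicShell f g y k) :=
        lintegral_mono' (Measure.restrict_mono_ae (ae_subset_iUnion_dyadicShell g hf y hy)) le_rfl
    _ ≤ ∑' k, wSet w (dyadicShell f g y k) := lintegral_iUnion_le _ _
    _ ≤ ∑' k : ℕ, AB ^ p *
          ENNReal.ofReal (((((2 : ℝ) ^ (k + 1))⁻¹ ^ δ * (2 ^ k * y)) ^ p)⁻¹) :=
        ENNReal.tsum_le_tsum fun k => by
          rw [← ENNReal.div_ofReal_rpow AB (by positivity) hp₀.le]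
          exact wSet_dyadicShell_le hp₁ hp₂ hp hδ₀ hw₁ hw₂ f g hy k
    _ = AB ^ p * ENNReal.ofReal (((y / K) ^ p)⁻¹) := by
        rw [ENNReal.tsum_mul_left, ← ENNReal.ofReal_tsum_of_nonneg (fun k => by positivity)
          hsum.summable, hsum.tsum_eq]
    _ = (ENNReal.ofReal K * AB / ENNReal.ofReal y) ^ p := by
        rw [Real.div_rpow hy.le hK.le, inv_div, div_eq_mul_inv, ENNReal.div_ofReal_rpow _ hy hp₀.le,
          ENNReal.mul_rpow_of_nonneg (ENNReal.ofReal K) AB hp₀.le, ENNReal.ofReal_rpow_of_pos hK,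
          ENNReal.ofReal_mul (by positivity)]
        ring

end WeakType

/-- weak Hölder inequality with change of measures, with a δ-power loss. -/
theorem stmt_5 (p p₁ p₂ : ℝ) (hp₁ : 0 < p₁) (hp₂ : 0 < p₂)
    (hp : 1 / p = 1 / p₁ + 1 / p₂) (δ : ℝ) (hδ₀ : 0 < δ) (hδ₁ : δ < 1) :
    ∃ C : ℝ, 0 < C ∧
      C = sInf {c : ℝ | ∃ q : ℝ, 0 < q ∧ q < p ∧
        c = 2 * (p / (Real.log 2 * (1 - δ) * q * (p - q))) ^ (1 / q)} ∧
      ∀ (n : ℕ) (w₁ w₂ : Rn n → ℝ), IsWeight w₁ → IsWeight w₂ →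
        ∀ f g : Rn n → ℝ, Measurable f → Measurable g →
          (∀ᵐ x ∂(volume : Measure (Rn n)), |f x| ≤ 1) →
          wLpInfty p (fun x => w₁ x ^ (p / p₁) * w₂ x ^ (p / p₂))
              (ennAbs fun x => f x * g x) ≤
            ENNReal.ofReal C * wLpInfty p₁ w₁ (fun x => ENNReal.ofReal (|f x| ^ δ)) *
              wLpInfty p₂ w₂ (ennAbs g) := by
  have hp₀ : 0 < p := one_div_pos.1 (by rw [hp]; positivity)
  have hθ : p / p₁ + p / p₂ = 1 := by
    rw [div_eq_mul_one_div p p₁, div_eq_mul_one_div p p₂, ← mul_add, ← hp,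
      mul_one_div_cancel hp₀.ne']
  have hK : dyadicHolderConst p δ ≤ sInf {c : ℝ | ∃ q : ℝ, 0 < q ∧ q < p ∧
      c = 2 * (p / (Real.log 2 * (1 - δ) * q * (p - q))) ^ (1 / q)} :=
    le_csInf ⟨_, p / 2, by positivity, by linarith, rfl⟩ fun _ ⟨_, hq, hqp, hc⟩ =>
      hc ▸ dyadicHolderConst_le hδ₁ hq hqp
  refine ⟨_, (dyadicHolderConst_pos hp₀ hδ₁).trans_le hK, rfl, ?_⟩
  intro n w₁ w₂ hw₁ hw₂ f g _ _ hf
  rw [mul_assoc]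
  exact (wLpInfty_mul_le_dyadicHolderConst hp₁ hp₂ hθ hδ₀ hδ₁ hw₁ hw₂ hf).trans
    (mul_le_mul_left (ENNReal.ofReal_le_ofReal hK) _)
end

section
/- Let 0 < p1, p2 < ∞, 1/p = 1/p1 + 1/p2, let w1, w2 be weights on ℝⁿ with w1, w2 ∈ A_∞, and set w := w1^{p/p1}·w2^{p/p2}. Then there exist constants c, C > 0 such that for every cube Q ⊆ ℝⁿ, c·w(Q)^{1/p} ≤ w1(Q)^{1/p1}·w2(Q)^{1/p2} ≤ C·w(Q)^{1/p}. -/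
open MeasureTheory ENNReal Set

/-!
Hölder's inequality gives `w(Q) ≤ w₁(Q)^(p/p₁) w₂(Q)^(p/p₂)`, hence the lower bound with `c = 1`.

For the upper bound, an `A_∞` weight satisfies the reverse Jensen inequality
`⨍_Q v ≤ C exp (⨍_Q log v)`: for `A₁` because `v ≥ C⁻¹ ⨍_Q v` a.e. on `Q`, for `A_p` by Jensen's
inequality for `v ^ (-1/(p-1))`. Since `log w = (p/p₁) log w₁ + (p/p₂) log w₂`, Jensen's inequality
`exp (⨍_Q log w) ≤ ⨍_Q w` then closes the chain
`(⨍_Q w₁)^(p/p₁) (⨍_Q w₂)^(p/p₂) ≤ C₁^(p/p₁) C₂^(p/p₂) ⨍_Q w`.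
-/

open ProbabilityTheory Real Filter

section ProbabilityMeasure

variable {α : Type*} [MeasurableSpace α] {μ : Measure α} {v : α → ℝ}

theorem integrable_log_of_neg_log_le (hv : ∀ x, 0 < v x) (hvi : Integrable v μ) {g : α → ℝ}
    (hg : Integrable g μ) (hle : ∀ᵐ x ∂μ, -log (v x) ≤ g x) :
    Integrable (fun x => log (v x)) μ := by
  refine (hvi.add hg.abs).mono'
    (measurable_log.comp_aemeasurable hvi.aemeasurable).aestronglyMeasurable ?_
  filter_upwards [hle] with x hx
  rw [Pi.add_apply, norm_eq_abs, abs_le]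
  constructor <;> linarith [log_le_self (hv x).le, le_abs_self (g x), abs_nonneg (g x), hv x]

theorem integrable_rpow_mul_rpow {v₁ v₂ : α → ℝ} (h₁ : ∀ x, 0 ≤ v₁ x) (h₂ : ∀ x, 0 ≤ v₂ x)
    (hi₁ : Integrable v₁ μ) (hi₂ : Integrable v₂ μ) {s t : ℝ} (hs : 0 ≤ s) (ht : 0 ≤ t)
    (hst : s + t = 1) : Integrable (fun x => v₁ x ^ s * v₂ x ^ t) μ := by
  refine ((hi₁.const_mul s).add (hi₂.const_mul t)).mono'
    ((hi₁.aemeasurable.pow_const s).mul (hi₂.aemeasurable.pow_const t)).aestronglyMeasurable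
    (Eventually.of_forall fun x => ?_)
  rw [norm_of_nonneg (mul_nonneg (rpow_nonneg (h₁ x) s) (rpow_nonneg (h₂ x) t))]
  exact geom_mean_le_arith_mean2_weighted hs ht (h₁ x) (h₂ x) hst

variable [IsProbabilityMeasure μ]

theorem integral_pos_of_forall_pos (hv : ∀ x, 0 < v x) (hvi : Integrable v μ) :
    0 < ∫ x, v x ∂μ :=
  let ⟨x, hx⟩ := exists_le_integral hvi
  (hv x).trans_le hx

theorem exp_integral_log_le_integral (hv : ∀ x, 0 < v x) (hvi : Integrable v μ)
    (hlog : Integrable (fun x => log (v x)) μ) :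
    exp (∫ x, log (v x) ∂μ) ≤ ∫ x, v x ∂μ := by
  have hexp_log : (fun x => exp (log (v x))) = v := funext fun x => exp_log (hv x)
  have := convexOn_exp.map_integral_le continuous_exp.continuousOn isClosed_univ
    (Eventually.of_forall fun x => mem_univ (log (v x))) hlog (by rwa [Function.comp_def, hexp_log])
  rwa [hexp_log] at this

theorem integral_le_mul_exp_integral_log_of_ae_le (hv : ∀ x, 0 < v x) (hvi : Integrable v μ)
    {C : ℝ} (hC : 0 < C) (h : ∀ᵐ x ∂μ, ∫ y, v y ∂μ ≤ C * v x) :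
    Integrable (fun x => log (v x)) μ ∧ ∫ x, v x ∂μ ≤ C * exp (∫ x, log (v x) ∂μ) := by
  have hmean : 0 < (∫ y, v y ∂μ) / C := div_pos (integral_pos_of_forall_pos hv hvi) hC
  have hlow : ∀ᵐ x ∂μ, log ((∫ y, v y ∂μ) / C) ≤ log (v x) := by
    filter_upwards [h] with x hx
    exact log_le_log hmean (by rwa [div_le_iff₀' hC])
  have hlog : Integrable (fun x => log (v x)) μ :=
    integrable_log_of_neg_log_le hv hvi (integrable_const (-log ((∫ y, v y ∂μ) / C)))
      (by filter_upwards [hlow] with x hx using neg_le_neg hx)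
  refine ⟨hlog, ?_⟩
  have hint : log ((∫ y, v y ∂μ) / C) ≤ ∫ x, log (v x) ∂μ := by
    simpa using integral_mono_ae (integrable_const _) hlog hlow
  rw [← div_le_iff₀' hC, ← exp_log hmean]
  exact exp_le_exp.mpr hint

/-- With `q = p - 1`, `hK` is the `A_p` condition on a single cube. -/
theorem integral_le_mul_exp_integral_log_of_integral_mul_integral_rpow_le {q K : ℝ} (hq : 0 < q)
    (hv : ∀ x, 0 < v x) (hvi : Integrable v μ) (hσ : Integrable (fun x => v x ^ (-q⁻¹)) μ)
    (hK : (∫ x, v x ∂μ) * (∫ x, v x ^ (-q⁻¹) ∂μ) ^ q ≤ K) :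
    Integrable (fun x => log (v x)) μ ∧ ∫ x, v x ∂μ ≤ K * exp (∫ x, log (v x) ∂μ) := by
  have hσpos : ∀ x, 0 < v x ^ (-q⁻¹) := fun x => rpow_pos_of_pos (hv x) _
  have hlogσ : ∀ x, log (v x ^ (-q⁻¹)) = -q⁻¹ * log (v x) := fun x => log_rpow (hv x) _
  have hlog : Integrable (fun x => log (v x)) μ := by
    refine integrable_log_of_neg_log_le hv hvi (hσ.const_mul q) (Eventually.of_forall fun x => ?_)
    have h := log_le_self (hσpos x).le
    rw [hlogσ] at h
    calc -log (v x) = q * (-q⁻¹ * log (v x)) := by field_simp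
      _ ≤ q * v x ^ (-q⁻¹) := mul_le_mul_of_nonneg_left h hq.le
  refine ⟨hlog, ?_⟩
  set L := ∫ x, log (v x) ∂μ
  have hJensen : exp (-q⁻¹ * L) ≤ ∫ x, v x ^ (-q⁻¹) ∂μ := by
    have h := exp_integral_log_le_integral hσpos hσ (by simpa only [hlogσ] using hlog.const_mul _)
    simpa only [hlogσ, integral_const_mul] using h
  have hexp : exp (-L) ≤ (∫ x, v x ^ (-q⁻¹) ∂μ) ^ q := by
    calc exp (-L) = exp (-q⁻¹ * L) ^ q := by rw [← exp_mul]; field_simp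
      _ ≤ _ := rpow_le_rpow (exp_pos _).le hJensen hq.le
  have hmean : 0 ≤ ∫ x, v x ∂μ := integral_nonneg fun x => (hv x).le
  calc ∫ x, v x ∂μ = (∫ x, v x ∂μ) * exp (-L) * exp L := by
        rw [mul_assoc, ← exp_add, neg_add_cancel, exp_zero, mul_one]
    _ ≤ K * exp L := by
        gcongr
        exact (mul_le_mul_of_nonneg_left hexp hmean).trans hK

theorem integral_rpow_mul_integral_rpow_le {v₁ v₂ : α → ℝ} (hv₁ : ∀ x, 0 < v₁ x)
    (hv₂ : ∀ x, 0 < v₂ x) (hi₁ : Integrable v₁ μ) (hi₂ : Integrable v₂ μ)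
    (hlog₁ : Integrable (fun x => log (v₁ x)) μ) (hlog₂ : Integrable (fun x => log (v₂ x)) μ)
    {s t C₁ C₂ : ℝ} (hs : 0 ≤ s) (ht : 0 ≤ t) (hst : s + t = 1) (hC₁ : 0 ≤ C₁) (hC₂ : 0 ≤ C₂)
    (h₁ : ∫ x, v₁ x ∂μ ≤ C₁ * exp (∫ x, log (v₁ x) ∂μ))
    (h₂ : ∫ x, v₂ x ∂μ ≤ C₂ * exp (∫ x, log (v₂ x) ∂μ)) :
    (∫ x, v₁ x ∂μ) ^ s * (∫ x, v₂ x ∂μ) ^ t ≤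
      C₁ ^ s * C₂ ^ t * ∫ x, v₁ x ^ s * v₂ x ^ t ∂μ := by
  set L₁ := ∫ x, log (v₁ x) ∂μ
  set L₂ := ∫ x, log (v₂ x) ∂μ
  have hlog : ∀ x, log (v₁ x ^ s * v₂ x ^ t) = s * log (v₁ x) + t * log (v₂ x) := fun x => by
    rw [log_mul (rpow_pos_of_pos (hv₁ x) s).ne' (rpow_pos_of_pos (hv₂ x) t).ne',
      log_rpow (hv₁ x), log_rpow (hv₂ x)]
  have hJensen : exp (s * L₁ + t * L₂) ≤ ∫ x, v₁ x ^ s * v₂ x ^ t ∂μ := by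
    have hlogi : Integrable (fun x => log (v₁ x ^ s * v₂ x ^ t)) μ := by
      refine ((hlog₁.const_mul s).add (hlog₂.const_mul t)).congr
        (Eventually.of_forall fun x => (hlog x).symm)
    have h := exp_integral_log_le_integral
      (fun x => mul_pos (rpow_pos_of_pos (hv₁ x) s) (rpow_pos_of_pos (hv₂ x) t))
      (integrable_rpow_mul_rpow (fun x => (hv₁ x).le) (fun x => (hv₂ x).le) hi₁ hi₂ hs ht hst)
      hlogi
    rwa [integral_congr_ae (Eventually.of_forall hlog),
      integral_add (hlog₁.const_mul s) (hlog₂.const_mul t), integral_const_mul,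
      integral_const_mul] at h
  have hm₁ : 0 ≤ ∫ x, v₁ x ∂μ := integral_nonneg fun x => (hv₁ x).le
  have hm₂ : 0 ≤ ∫ x, v₂ x ∂μ := integral_nonneg fun x => (hv₂ x).le
  calc (∫ x, v₁ x ∂μ) ^ s * (∫ x, v₂ x ∂μ) ^ t
      ≤ (C₁ * exp L₁) ^ s * (C₂ * exp L₂) ^ t :=
        mul_le_mul (rpow_le_rpow hm₁ h₁ hs) (rpow_le_rpow hm₂ h₂ ht) (rpow_nonneg hm₂ t)
          (rpow_nonneg (mul_nonneg hC₁ (exp_pos L₁).le) s)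
    _ = C₁ ^ s * C₂ ^ t * exp (s * L₁ + t * L₂) := by
        rw [mul_rpow hC₁ (exp_pos _).le, mul_rpow hC₂ (exp_pos _).le, ← exp_mul, ← exp_mul,
          exp_add]
        ring_nf
    _ ≤ C₁ ^ s * C₂ ^ t * ∫ x, v₁ x ^ s * v₂ x ^ t ∂μ := by gcongr

end ProbabilityMeasure

theorem lintegral_cond {α : Type*} [MeasurableSpace α] (μ : Measure α) (s : Set α)
    (f : α → ℝ≥0∞) : ∫⁻ x, f x ∂μ[|s] = (μ s)⁻¹ * ∫⁻ x in s, f x ∂μ := by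
  rw [ProbabilityTheory.cond, lintegral_smul_measure, smul_eq_mul]

namespace IsCube

variable {n : ℕ} {Q : Set (Rn n)}

theorem eq_preimage_pi (c : Rn n) (r : ℝ) :
    {x : Rn n | ∀ i, |x i - c i| ≤ r} =
      EuclideanSpace.equiv (Fin n) ℝ ⁻¹' univ.pi fun i => Icc (c i - r) (c i + r) := by
  ext x
  simp only [mem_ofPred_eq, mem_preimage, mem_univ_pi, mem_Icc, abs_sub_le_iff]
  refine forall_congr' fun i => ?_
  change _ ↔ _ ≤ x i ∧ x i ≤ _
  constructor <;> rintro ⟨h₁, h₂⟩ <;> constructor <;> linarith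

theorem isCompact (hQ : IsCube Q) : IsCompact Q := by
  obtain ⟨c, r, -, rfl⟩ := hQ
  rw [eq_preimage_pi]
  exact (EuclideanSpace.equiv (Fin n) ℝ).toHomeomorph.isCompact_preimage.mpr
    (isCompact_univ_pi fun i => isCompact_Icc)

theorem measurableSet (hQ : IsCube Q) : MeasurableSet Q :=
  hQ.isCompact.isClosed.measurableSet

theorem volume_ne_top (hQ : IsCube Q) : volume Q ≠ ⊤ :=
  hQ.isCompact.measure_lt_top.ne

theorem volume_pos (hQ : IsCube Q) : 0 < volume Q := by
  obtain ⟨c, r, hr, rfl⟩ := hQ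
  refine (Metric.measure_ball_pos volume c hr).trans_le (measure_mono fun x hx i => ?_)
  calc |x i - c i| = ‖(x - c) i‖ := rfl
    _ ≤ ‖x - c‖ := PiLp.norm_apply_le _ i
    _ ≤ r := (mem_ball_iff_norm.mp hx).le

theorem isProbabilityMeasure_cond (hQ : IsCube Q) : IsProbabilityMeasure (volume[|Q]) :=
  cond_isProbabilityMeasure_of_finite hQ.volume_pos.ne' hQ.volume_ne_top

end IsCube

section Weights

variable {n : ℕ} {v : Rn n → ℝ} {Q : Set (Rn n)}

theorem IsWeight.integrable_cond (hv : IsWeight v) (hQ : IsCube Q) : Integrable v (volume[|Q]) :=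
  (hv.2.integrableOn_isCompact hQ.isCompact).smul_measure
    (ENNReal.inv_ne_top.mpr hQ.volume_pos.ne')

theorem ofReal_integral_cond_eq (hv : ∀ x, 0 ≤ v x) (hvi : Integrable v (volume[|Q])) :
    ENNReal.ofReal (∫ x, v x ∂volume[|Q]) = (volume Q)⁻¹ * wSet v Q := by
  rw [ofReal_integral_eq_lintegral_ofReal hvi (ae_of_all _ hv), lintegral_cond, wSet]

theorem wSet_eq_mul_ofReal_integral_cond (hQ : IsCube Q) (hv : ∀ x, 0 ≤ v x)
    (hvi : Integrable v (volume[|Q])) :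
    wSet v Q = volume Q * ENNReal.ofReal (∫ x, v x ∂volume[|Q]) := by
  rw [ofReal_integral_cond_eq hv hvi, ← mul_assoc,
    ENNReal.mul_inv_cancel hQ.volume_pos.ne' hQ.volume_ne_top, one_mul]

theorem IsWeight.ofReal_integral_cond_le_maximal (hv : IsWeight v) (hQ : IsCube Q) {x : Rn n}
    (hx : x ∈ Q) : ENNReal.ofReal (∫ y, v y ∂volume[|Q]) ≤ maximal v x := by
  rw [ofReal_integral_cond_eq (fun y => (hv.1 y).le) (hv.integrable_cond hQ)]
  refine le_iSup_of_le Q (le_iSup_of_le hQ (le_iSup_of_le hx (le_of_eq ?_)))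
  simp_rw [wSet, abs_of_pos (hv.1 _)]

end Weights

/-- Integrals against `volume[|Q]` are averages over `Q`; this reverse Jensen inequality on all cubes
is Hruščev's characterisation of `A_∞`. -/
def ReverseJensenOnCubes {n : ℕ} (C : ℝ) (v : Rn n → ℝ) : Prop :=
  ∀ Q : Set (Rn n), IsCube Q → Integrable (fun x => log (v x)) (volume[|Q]) ∧
    ∫ x, v x ∂volume[|Q] ≤ C * exp (∫ x, log (v x) ∂volume[|Q])

section ReverseJensen

variable {n : ℕ} {v : Rn n → ℝ}

theorem ReverseJensenOnCubes.mono {C D : ℝ} (h : ReverseJensenOnCubes C v) (hCD : C ≤ D) :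
    ReverseJensenOnCubes D v := fun Q hQ =>
  ⟨(h Q hQ).1, (h Q hQ).2.trans (mul_le_mul_of_nonneg_right hCD (exp_pos _).le)⟩

theorem MemA1.exists_reverseJensenOnCubes (hv : IsWeight v) (hA : MemA1 v) :
    ∃ C, 0 < C ∧ ReverseJensenOnCubes C v := by
  obtain ⟨C, hC⟩ := hA
  refine ⟨max C 1, by positivity, fun Q hQ => ?_⟩
  have := hQ.isProbabilityMeasure_cond
  refine integral_le_mul_exp_integral_log_of_ae_le hv.1 (hv.integrable_cond hQ) (by positivity) ?_
  filter_upwards [cond_absolutelyContinuous.ae_le hC, ae_cond_mem hQ.measurableSet]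
    with x hx hxQ
  have hCv : ENNReal.ofReal (C * v x) ≤ ENNReal.ofReal (max C 1 * v x) :=
    ofReal_le_ofReal (mul_le_mul_of_nonneg_right (le_max_left C 1) (hv.1 x).le)
  exact (ofReal_le_ofReal_iff (mul_nonneg (by positivity) (hv.1 x).le)).mp
    ((hv.ofReal_integral_cond_le_maximal hQ hxQ).trans (hx.trans hCv))

theorem reverseJensenOnCubes_of_apConst_ne_top {p : ℝ} (hp : 1 < p) (hv : IsWeight v)
    (hA : ApConst p v ≠ ⊤) : ReverseJensenOnCubes (ApConst p v).toReal v := by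
  intro Q hQ
  have := hQ.isProbabilityMeasure_cond
  have hq : 0 < p - 1 := sub_pos.mpr hp
  have hexp : 1 - p / (p - 1) = -(p - 1)⁻¹ := by field_simp; ring
  have hvi := hv.integrable_cond hQ
  have hterm : ENNReal.ofReal (∫ x, v x ∂volume[|Q]) *
      (∫⁻ x, ENNReal.ofReal (v x ^ (-(p - 1)⁻¹)) ∂volume[|Q]) ^ (p - 1) ≤ ApConst p v := by
    rw [ofReal_integral_eq_lintegral_ofReal hvi (ae_of_all _ fun x => (hv.1 x).le),
      lintegral_cond, lintegral_cond, ← hexp]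
    exact le_iSup₂_of_le Q hQ le_rfl
  have hσpos : ∀ x, 0 ≤ v x ^ (-(p - 1)⁻¹) := fun x => rpow_nonneg (hv.1 x).le _
  have hσi : Integrable (fun x => v x ^ (-(p - 1)⁻¹)) (volume[|Q]) := by
    refine ⟨(hvi.aemeasurable.pow_const _).aestronglyMeasurable,
      (hasFiniteIntegral_iff_ofReal (ae_of_all _ hσpos)).mpr (lt_top_iff_ne_top.mpr ?_)⟩
    intro htop
    have hmean : ENNReal.ofReal (∫ x, v x ∂volume[|Q]) ≠ 0 :=
      (ofReal_pos.mpr (integral_pos_of_forall_pos hv.1 hvi)).ne'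
    rw [htop, ENNReal.top_rpow_of_pos hq, ENNReal.mul_top hmean] at hterm
    exact hA (top_le_iff.mp hterm)
  refine integral_le_mul_exp_integral_log_of_integral_mul_integral_rpow_le hq hv.1 hvi hσi
    ((ofReal_le_iff_le_toReal hA).mp ?_)
  rwa [ofReal_mul (integral_nonneg fun x => (hv.1 x).le),
    ← ofReal_rpow_of_nonneg (integral_nonneg hσpos) hq.le,
    ofReal_integral_eq_lintegral_ofReal hσi (ae_of_all _ hσpos)]

theorem MemAinfty.exists_reverseJensenOnCubes (hv : IsWeight v) (hA : MemAinfty v) :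
    ∃ C, 0 < C ∧ ReverseJensenOnCubes C v := by
  obtain ⟨p, -, ⟨-, hA₁⟩ | ⟨hp, hAp⟩⟩ := hA
  · exact hA₁.exists_reverseJensenOnCubes hv
  · exact ⟨_, by positivity,
      (reverseJensenOnCubes_of_apConst_ne_top hp hv hAp).mono (le_add_of_nonneg_right zero_le_one)⟩

end ReverseJensen

section Exponents

variable {p p₁ p₂ : ℝ}

theorem pos_of_one_div_eq_add (hp₁ : 0 < p₁) (hp₂ : 0 < p₂) (hp : 1 / p = 1 / p₁ + 1 / p₂) :
    0 < p :=
  one_div_pos.mp (hp ▸ by positivity)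

theorem div_add_div_eq_one_of_one_div_eq_add (hp₁ : 0 < p₁) (hp₂ : 0 < p₂)
    (hp : 1 / p = 1 / p₁ + 1 / p₂) : p / p₁ + p / p₂ = 1 := by
  have := pos_of_one_div_eq_add hp₁ hp₂ hp
  field_simp at hp ⊢
  linarith

theorem ENNReal.rpow_div_mul_rpow_div_rpow_one_div (hp : 0 < p) (x y : ℝ≥0∞) :
    (x ^ (p / p₁) * y ^ (p / p₂)) ^ (1 / p) = x ^ (1 / p₁) * y ^ (1 / p₂) := by
  rw [ENNReal.mul_rpow_of_nonneg _ _ (by positivity), ← ENNReal.rpow_mul, ← ENNReal.rpow_mul]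
  congr 2 <;> field_simp

theorem ENNReal.mul_rpow_mul_mul_rpow_le (hp₁ : 0 < p₁) (hp₂ : 0 < p₂)
    (hp : 1 / p = 1 / p₁ + 1 / p₂) {V a₁ a₂ a K : ℝ≥0∞}
    (h : a₁ ^ (p / p₁) * a₂ ^ (p / p₂) ≤ K * a) :
    (V * a₁) ^ (1 / p₁) * (V * a₂) ^ (1 / p₂) ≤ K ^ (1 / p) * (V * a) ^ (1 / p) := by
  have hp₀ := pos_of_one_div_eq_add hp₁ hp₂ hp
  calc (V * a₁) ^ (1 / p₁) * (V * a₂) ^ (1 / p₂)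
      = V ^ (1 / p) * (a₁ ^ (p / p₁) * a₂ ^ (p / p₂)) ^ (1 / p) := by
        rw [ENNReal.mul_rpow_of_nonneg _ _ (by positivity),
          ENNReal.mul_rpow_of_nonneg _ _ (by positivity),
          ENNReal.rpow_div_mul_rpow_div_rpow_one_div hp₀, hp,
          ENNReal.rpow_add_of_nonneg _ _ (by positivity) (by positivity)]
        ring
    _ ≤ V ^ (1 / p) * (K * a) ^ (1 / p) := by gcongr
    _ = K ^ (1 / p) * (V * a) ^ (1 / p) := by
        rw [ENNReal.mul_rpow_of_nonneg _ _ (by positivity),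
          ENNReal.mul_rpow_of_nonneg _ _ (by positivity)]
        ring

end Exponents

section Products

variable {n : ℕ} {w₁ w₂ : Rn n → ℝ}

theorem wSet_rpow_mul_rpow_le_s6 (h₁ : ∀ x, 0 ≤ w₁ x) (h₂ : ∀ x, 0 ≤ w₂ x)
    (hm₁ : AEMeasurable w₁) (hm₂ : AEMeasurable w₂) {s t : ℝ} (hs : 0 ≤ s) (ht : 0 ≤ t)
    (hst : s + t = 1) (F : Set (Rn n)) :
    wSet (fun x => w₁ x ^ s * w₂ x ^ t) F ≤ wSet w₁ F ^ s * wSet w₂ F ^ t := by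
  refine le_of_eq_of_le (lintegral_congr fun x => ?_)
    (ENNReal.lintegral_mul_norm_pow_le hm₁.ennreal_ofReal.restrict hm₂.ennreal_ofReal.restrict
      hs ht hst)
  rw [ofReal_mul (rpow_nonneg (h₁ x) s), ofReal_rpow_of_nonneg (h₁ x) hs,
    ofReal_rpow_of_nonneg (h₂ x) ht]

theorem wSet_rpow_mul_wSet_rpow_le_of_reverseJensenOnCubes (hw₁ : IsWeight w₁)
    (hw₂ : IsWeight w₂) {C₁ C₂ : ℝ} (hC₁ : 0 ≤ C₁) (hC₂ : 0 ≤ C₂)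
    (hRJ₁ : ReverseJensenOnCubes C₁ w₁) (hRJ₂ : ReverseJensenOnCubes C₂ w₂) {p p₁ p₂ : ℝ}
    (hp₁ : 0 < p₁) (hp₂ : 0 < p₂) (hp : 1 / p = 1 / p₁ + 1 / p₂) {Q : Set (Rn n)}
    (hQ : IsCube Q) :
    wSet w₁ Q ^ (1 / p₁) * wSet w₂ Q ^ (1 / p₂) ≤
      ENNReal.ofReal (C₁ ^ (p / p₁) * C₂ ^ (p / p₂)) ^ (1 / p) *
        wSet (fun x => w₁ x ^ (p / p₁) * w₂ x ^ (p / p₂)) Q ^ (1 / p) := by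
  have := hQ.isProbabilityMeasure_cond
  have hp₀ := pos_of_one_div_eq_add hp₁ hp₂ hp
  have hs : 0 ≤ p / p₁ := by positivity
  have ht : 0 ≤ p / p₂ := by positivity
  have hst := div_add_div_eq_one_of_one_div_eq_add hp₁ hp₂ hp
  have hi₁ := hw₁.integrable_cond hQ
  have hi₂ := hw₂.integrable_cond hQ
  have hmean₁ : 0 ≤ ∫ x, w₁ x ∂volume[|Q] := integral_nonneg fun x => (hw₁.1 x).le
  have hmean₂ : 0 ≤ ∫ x, w₂ x ∂volume[|Q] := integral_nonneg fun x => (hw₂.1 x).le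
  have hpos : ∀ x, 0 ≤ w₁ x ^ (p / p₁) * w₂ x ^ (p / p₂) := fun x =>
    mul_nonneg (rpow_nonneg (hw₁.1 x).le _) (rpow_nonneg (hw₂.1 x).le _)
  rw [wSet_eq_mul_ofReal_integral_cond hQ (fun x => (hw₁.1 x).le) hi₁,
    wSet_eq_mul_ofReal_integral_cond hQ (fun x => (hw₂.1 x).le) hi₂,
    wSet_eq_mul_ofReal_integral_cond hQ hpos
      (integrable_rpow_mul_rpow (fun x => (hw₁.1 x).le) (fun x => (hw₂.1 x).le) hi₁ hi₂ hs ht hst)]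
  refine ENNReal.mul_rpow_mul_mul_rpow_le hp₁ hp₂ hp ?_
  rw [ofReal_rpow_of_nonneg hmean₁ hs, ofReal_rpow_of_nonneg hmean₂ ht, ← ofReal_mul
    (rpow_nonneg hmean₁ _), ← ofReal_mul (by positivity)]
  exact ofReal_le_ofReal (integral_rpow_mul_integral_rpow_le hw₁.1 hw₂.1 hi₁ hi₂ (hRJ₁ Q hQ).1
    (hRJ₂ Q hQ).1 hs ht hst hC₁ hC₂ (hRJ₁ Q hQ).2 (hRJ₂ Q hQ).2)

end Products

/-- for A_∞ weights, w₁(Q)^{1/p₁} w₂(Q)^{1/p₂} ≈ w(Q)^{1/p} over cubes. -/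
theorem stmt_6 {n : ℕ} (p p₁ p₂ : ℝ) (hp₁ : 0 < p₁) (hp₂ : 0 < p₂)
    (hp : 1 / p = 1 / p₁ + 1 / p₂)
    (w₁ w₂ : Rn n → ℝ) (hw₁ : IsWeight w₁) (hw₂ : IsWeight w₂)
    (hA₁ : MemAinfty w₁) (hA₂ : MemAinfty w₂)
    (w : Rn n → ℝ) (hw : ∀ x, w x = w₁ x ^ (p / p₁) * w₂ x ^ (p / p₂)) :
    ∃ c C : ℝ, 0 < c ∧ 0 < C ∧ ∀ Q : Set (Rn n), IsCube Q →
      ENNReal.ofReal c * (wSet w Q) ^ (1 / p) ≤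
          (wSet w₁ Q) ^ (1 / p₁) * (wSet w₂ Q) ^ (1 / p₂) ∧
        (wSet w₁ Q) ^ (1 / p₁) * (wSet w₂ Q) ^ (1 / p₂) ≤
          ENNReal.ofReal C * (wSet w Q) ^ (1 / p) := by
  obtain rfl : w = fun x => w₁ x ^ (p / p₁) * w₂ x ^ (p / p₂) := funext hw
  have hp₀ := pos_of_one_div_eq_add hp₁ hp₂ hp
  obtain ⟨C₁, hC₁, hRJ₁⟩ := hA₁.exists_reverseJensenOnCubes hw₁
  obtain ⟨C₂, hC₂, hRJ₂⟩ := hA₂.exists_reverseJensenOnCubes hw₂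
  refine ⟨1, (C₁ ^ (p / p₁) * C₂ ^ (p / p₂)) ^ (1 / p), one_pos, by positivity,
    fun Q hQ => ⟨?_, ?_⟩⟩
  · rw [ofReal_one, one_mul, ← ENNReal.rpow_div_mul_rpow_div_rpow_one_div hp₀]
    gcongr
    exact wSet_rpow_mul_rpow_le_s6 (fun x => (hw₁.1 x).le) (fun x => (hw₂.1 x).le)
      hw₁.2.aestronglyMeasurable.aemeasurable hw₂.2.aestronglyMeasurable.aemeasurable
      (by positivity) (by positivity) (div_add_div_eq_one_of_one_div_eq_add hp₁ hp₂ hp) Q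
  · rw [← ofReal_rpow_of_nonneg (by positivity) (by positivity)]
    exact wSet_rpow_mul_wSet_rpow_le_of_reverseJensenOnCubes hw₁ hw₂ hC₁.le hC₂.le hRJ₁ hRJ₂
      hp₁ hp₂ hp hQ
end
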